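/- arXiv:1907.02898 — 2 statements merged into one kernel-verified Lean document; each statement's English description precedes it below -/
import Mathlib

section
/- Let n ≥ 2 with prime factorization n = p1^{e1} ⋯ pk^{ek}, and let Q_{4n} = ⟨x, y : x^{2n} = 1, x^n = y^2, y^{-1}xy = x^{-1}⟩ be the dicyclic group of order 4n. If n is not a power of 2, then ι(Q_{4n}) = k + 1; if n is a power of 2, then ι(Q_{4n}) = 2. -/
/-- The intersection number of a group: the minimum number of maximal subgroups
whose intersection equals the Frattini subgroup. -/
noncomputable def interNum (G : Type*) [Group G] : ℕ :=
  sInf {n | ∃ s : Finset (Subgroup G), s.card = n ∧ (∀ M ∈ s, IsCoatom M) ∧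
    s.inf id = frattini G}

/-!
The maximal subgroups of `QuaternionGroup n` are the cyclic subgroup of the `a i`, of
index 2, and, for each prime `p ∣ n` and `c : ZMod p`, the subgroup of the `a i` with `i ≡ 0`
and the `xa i` with `i ≡ c` modulo `p`. Indeed, if a proper subgroup `H` contains some `xa j`,
then `1 ∉ {k : ℤ | a k ∈ H}`, so this subgroup of `ℤ` lies in `pℤ` for a prime `p`, and
`p ∣ n` because `(xa j)² = a n`; this puts `H` inside one of the subgroups of index `p`.

The Frattini subgroup is therefore the intersection of the subgroup of index 2 with one
subgroup of index `p` for each prime `p ∣ n`, which uses `ω(n) + 1` maximal subgroups.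
Conversely, a family cutting out the Frattini subgroup contains a subgroup of index `p` for
every `p` (otherwise `a (rad n / p)` survives), and by the Chinese remainder theorem these have
a common element `xa k`, which some further member of the family must exclude.
-/

theorem Int.exists_prime_forall_dvd_of_one_notMem {H : AddSubgroup ℤ} (h : (1 : ℤ) ∉ H) :
    ∃ p : ℕ, p.Prime ∧ ∀ k ∈ H, (p : ℤ) ∣ k := by
  obtain ⟨g, rfl⟩ := Int.subgroup_cyclic H
  have hg : g.natAbs ≠ 1 := fun hg => h <| by
    rcases Int.natAbs_eq_iff.mp hg with rfl | rfl <;> simp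
  obtain ⟨p, hp, hpg⟩ := Nat.exists_prime_and_dvd hg
  refine ⟨p, hp, fun k hk => ?_⟩
  obtain ⟨m, rfl⟩ := AddSubgroup.mem_closure_singleton.mp hk
  exact dvd_mul_of_dvd_right (Int.natCast_dvd.mpr hpg)

theorem ZMod.exists_natCast_eq_of_pairwise_coprime {ι : Type*} {s : ι → ℕ} {t : Finset ι}
    (hs : ∀ i ∈ t, s i ≠ 0) (hcop : Set.Pairwise t (Function.onFun Nat.Coprime s))
    (c : ∀ i, ZMod (s i)) :
    ∃ k : ℕ, ∀ i ∈ t, (k : ZMod (s i)) = c i := by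
  refine ⟨Nat.chineseRemainderOfFinset (fun i => (c i).val) s t hs hcop, fun i hi => ?_⟩
  have : NeZero (s i) := ⟨hs i hi⟩
  rw [← ZMod.natCast_zmod_val (c i), ZMod.natCast_eq_natCast_iff]
  exact (Nat.chineseRemainderOfFinset _ s t hs hcop).2 i hi

theorem Subgroup.mem_finset_inf_id {G : Type*} [Group G] {s : Finset (Subgroup G)} {g : G} :
    g ∈ s.inf id ↔ ∀ M ∈ s, g ∈ M := by
  simp [Finset.inf_eq_iInf, Subgroup.mem_iInf]

theorem mem_frattini_iff {G : Type*} [Group G] {g : G} :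
    g ∈ frattini G ↔ ∀ M : Subgroup G, IsCoatom M → g ∈ M := by
  simp only [frattini, Order.radical, Subgroup.mem_iInf, Set.mem_ofPred_eq]

theorem interNum_le {G : Type*} [Group G] {s : Finset (Subgroup G)}
    (hs : ∀ M ∈ s, IsCoatom M) (h : s.inf id = frattini G) : interNum G ≤ s.card :=
  Nat.sInf_le ⟨s, rfl, hs, h⟩

theorem le_interNum {G : Type*} [Group G] {k : ℕ}
    (hex : ∃ s : Finset (Subgroup G), (∀ M ∈ s, IsCoatom M) ∧ s.inf id = frattini G)
    (h : ∀ s : Finset (Subgroup G), (∀ M ∈ s, IsCoatom M) → s.inf id = frattini G →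
      k ≤ s.card) :
    k ≤ interNum G := by
  obtain ⟨s, hs, hinf⟩ := hex
  exact le_csInf ⟨_, s, rfl, hs, hinf⟩ fun _ ⟨t, ht, hco, htinf⟩ => ht ▸ h t hco htinf

namespace QuaternionGroup

variable {n p q : ℕ}

theorem xa_mul_inv_xa (i j : ZMod (2 * n)) : xa i * (xa j)⁻¹ = a (j - i) := by
  change xa i * xa ((n : ZMod (2 * n)) + j) = _
  rw [xa_mul_xa, ← add_assoc, ← Nat.cast_add, ← two_mul, ZMod.natCast_self, zero_add]

theorem eq_top_of_forall_a_mem {H : Subgroup (QuaternionGroup n)} (ha : ∀ i, a i ∈ H)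
    {j : ZMod (2 * n)} (hj : xa j ∈ H) : H = ⊤ := by
  refine eq_top_iff.mpr fun g _ => ?_
  rcases g with i | i
  · exact ha i
  · simpa [a_mul_xa] using mul_mem (ha (j - i)) hj

def aSubgroup (n : ℕ) : Subgroup (QuaternionGroup n) where
  carrier := {g | ∃ i, g = a i}
  one_mem' := ⟨0, rfl⟩
  mul_mem' := by
    rintro _ _ ⟨i, rfl⟩ ⟨j, rfl⟩
    exact ⟨i + j, rfl⟩
  inv_mem' := by
    rintro _ ⟨i, rfl⟩
    exact ⟨-i, rfl⟩

@[simp] theorem a_mem_aSubgroup (i : ZMod (2 * n)) : a i ∈ aSubgroup n := ⟨i, rfl⟩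

@[simp] theorem xa_notMem_aSubgroup (i : ZMod (2 * n)) : xa i ∉ aSubgroup n := by
  rintro ⟨j, ⟨⟩⟩

theorem isCoatom_aSubgroup : IsCoatom (aSubgroup n) := by
  refine ⟨fun h => xa_notMem_aSubgroup (0 : ZMod (2 * n)) (h ▸ Subgroup.mem_top _),
    fun H hH => ?_⟩
  obtain ⟨g, hgH, hgA⟩ := SetLike.exists_of_lt hH
  rcases g with i | j
  · exact absurd (a_mem_aSubgroup i) hgA
  · exact eq_top_of_forall_a_mem (fun i => hH.le (a_mem_aSubgroup i)) hgH

def reduce (hp : p ∣ n) : ZMod (2 * n) →+* ZMod p :=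
  ZMod.castHom (hp.mul_left 2) (ZMod p)

theorem reduce_natCast_self (hp : p ∣ n) : reduce hp n = 0 := by
  rw [map_natCast, ZMod.natCast_eq_zero_iff]
  exact hp

def subgroupMod (hp : p ∣ n) (c : ZMod p) : Subgroup (QuaternionGroup n) where
  carrier := {g | match g with
    | a i => reduce hp i = 0
    | xa i => reduce hp i = c}
  one_mem' := map_zero (reduce hp)
  mul_mem' := by
    rintro (i | i) (j | j) hi hj <;>
      simp_all only [Set.mem_ofPred_eq, a_mul_a, a_mul_xa, xa_mul_a, xa_mul_xa, map_add, map_sub,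
        reduce_natCast_self] <;> simp
  inv_mem' := by
    rintro (i | i) hi
    · exact (map_neg (reduce hp) i).trans (by rw [hi, neg_zero])
    · exact (map_add (reduce hp) _ i).trans (by rw [reduce_natCast_self, hi, zero_add])

variable {hp : p ∣ n} {c : ZMod p}

@[simp] theorem a_mem_subgroupMod {i : ZMod (2 * n)} :
    a i ∈ subgroupMod hp c ↔ reduce hp i = 0 := Iff.rfl

@[simp] theorem xa_mem_subgroupMod {i : ZMod (2 * n)} :
    xa i ∈ subgroupMod hp c ↔ reduce hp i = c := Iff.rfl

theorem subgroupMod_ne_top (hp1 : p ≠ 1) : subgroupMod hp c ≠ ⊤ := by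
  intro h
  have := (a_mem_subgroupMod (c := c)).mp (h ▸ Subgroup.mem_top (a (1 : ZMod (2 * n))))
  rw [map_one, ← Nat.cast_one, ZMod.natCast_eq_zero_iff, Nat.dvd_one] at this
  exact hp1 this

theorem dvd_of_subgroupMod_le {hq : q ∣ n} {d : ZMod q}
    (h : subgroupMod hp c ≤ subgroupMod hq d) : q ∣ p := by
  have := h <| a_mem_subgroupMod.mpr <| show reduce hp (p : ZMod (2 * n)) = 0 by
    rw [map_natCast, ZMod.natCast_self]
  rwa [a_mem_subgroupMod, map_natCast, ZMod.natCast_eq_zero_iff] at this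

def exponents (H : Subgroup (QuaternionGroup n)) : AddSubgroup ℤ where
  carrier := {k | a (k : ZMod (2 * n)) ∈ H}
  zero_mem' := by simp
  add_mem' {k l} (hk : a _ ∈ H) (hl : a _ ∈ H) := by
    simpa [a_mul_a] using mul_mem hk hl
  neg_mem' {k} (hk : a _ ∈ H) := by
    change a _ ∈ H
    rw [Int.cast_neg]
    exact inv_mem hk

theorem mem_exponents {H : Subgroup (QuaternionGroup n)} {k : ℤ} :
    k ∈ exponents H ↔ a (k : ZMod (2 * n)) ∈ H := Iff.rfl

theorem exists_prime_le_subgroupMod {H : Subgroup (QuaternionGroup n)} (hH : H ≠ ⊤)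
    {j : ZMod (2 * n)} (hj : xa j ∈ H) :
    ∃ p, ∃ hp : p ∣ n, p.Prime ∧ H ≤ subgroupMod hp (reduce hp j) := by
  have hone : (1 : ℤ) ∉ exponents H := by
    refine fun hone => hH (eq_top_of_forall_a_mem (fun i => ?_) hj)
    have := zsmul_mem hone (i.cast : ℤ)
    rwa [smul_eq_mul, mul_one, mem_exponents, ZMod.intCast_zmod_cast] at this
  obtain ⟨p, hpp, hdvd⟩ := Int.exists_prime_forall_dvd_of_one_notMem hone
  have hp : p ∣ n := by
    refine Int.natCast_dvd_natCast.mp (hdvd n ?_)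
    rw [mem_exponents, Int.cast_natCast, ← xa_sq j]
    exact pow_mem hj 2
  have hred (i : ZMod (2 * n)) (hi : a i ∈ H) : reduce hp i = 0 := by
    rw [← ZMod.intCast_zmod_cast i, map_intCast, ZMod.intCast_zmod_eq_zero_iff_dvd]
    exact hdvd _ (by rwa [mem_exponents, ZMod.intCast_zmod_cast])
  refine ⟨p, hp, hpp, ?_⟩
  rintro (i | i) hi
  · exact hred i hi
  · have := hred _ (xa_mul_inv_xa i j ▸ mul_mem hi (inv_mem hj))
    rw [map_sub, sub_eq_zero] at this
    exact this.symm

theorem isCoatom_subgroupMod (hp : p ∣ n) (hpp : p.Prime) (c : ZMod p) :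
    IsCoatom (subgroupMod hp c) := by
  refine ⟨subgroupMod_ne_top hpp.ne_one, fun H hH => by_contra fun hHtop => ?_⟩
  obtain ⟨j, rfl⟩ := ZMod.ringHom_surjective (reduce hp) c
  obtain ⟨q, hq, hqp, hHq⟩ :=
    exists_prime_le_subgroupMod hHtop (hH.le (xa_mem_subgroupMod.mpr rfl))
  obtain rfl : q = p :=
    (Nat.prime_dvd_prime_iff_eq hqp hpp).mp (dvd_of_subgroupMod_le (hH.le.trans hHq))
  exact hH.not_ge hHq

theorem eq_aSubgroup_or_subgroupMod_of_isCoatom {M : Subgroup (QuaternionGroup n)}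
    (hM : IsCoatom M) :
    M = aSubgroup n ∨ ∃ p, ∃ hp : p ∣ n, p.Prime ∧ ∃ c, M = subgroupMod hp c := by
  by_cases hxa : ∃ j, xa j ∈ M
  · obtain ⟨j, hj⟩ := hxa
    obtain ⟨p, hp, hpp, hMp⟩ := exists_prime_le_subgroupMod hM.1 hj
    exact .inr ⟨p, hp, hpp, _,
      ((hM.le_iff.mp hMp).resolve_left (subgroupMod_ne_top hpp.ne_one)).symm⟩
  · have hMA : M ≤ aSubgroup n := by
      rintro (i | i) hi
      exacts [a_mem_aSubgroup i, absurd ⟨i, hi⟩ hxa]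
    exact .inl ((hM.le_iff.mp hMA).resolve_left isCoatom_aSubgroup.1).symm

theorem a_mem_frattini {i : ZMod (2 * n)} (h : ∀ p (hp : p ∣ n), p.Prime → reduce hp i = 0) :
    a i ∈ frattini (QuaternionGroup n) := by
  refine mem_frattini_iff.mpr fun M hM => ?_
  rcases eq_aSubgroup_or_subgroupMod_of_isCoatom hM with rfl | ⟨p, hp, hpp, c, rfl⟩
  exacts [a_mem_aSubgroup i, h p hp hpp]

theorem exists_coatoms_inf_eq_frattini (hn : n ≠ 0) :
    ∃ s : Finset (Subgroup (QuaternionGroup n)), s.card ≤ n.primeFactors.card + 1 ∧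
      (∀ M ∈ s, IsCoatom M) ∧ s.inf id = frattini (QuaternionGroup n) := by
  classical
  let S (p : n.primeFactors) := subgroupMod (Nat.dvd_of_mem_primeFactors p.2) 0
  have hS (p : n.primeFactors) : IsCoatom (S p) :=
    isCoatom_subgroupMod _ (Nat.prime_of_mem_primeFactors p.2) 0
  have hco : ∀ M ∈ insert (aSubgroup n) (n.primeFactors.attach.image S), IsCoatom M := by
    intro M hM
    rcases Finset.mem_insert.mp hM with rfl | hM
    · exact isCoatom_aSubgroup
    · obtain ⟨p, -, rfl⟩ := Finset.mem_image.mp hM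
      exact hS p
  refine ⟨_, ?_, hco, le_antisymm (fun g hg => ?_)
    (Finset.le_inf fun M hM => frattini_le_coatom (hco M hM))⟩
  · calc _ ≤ (n.primeFactors.attach.image S).card + 1 := Finset.card_insert_le _ _
      _ ≤ n.primeFactors.card + 1 := by
        simpa using Finset.card_image_le (s := n.primeFactors.attach) (f := S)
  · rw [Subgroup.mem_finset_inf_id] at hg
    obtain ⟨i, rfl⟩ := hg _ (Finset.mem_insert_self _ _)
    refine a_mem_frattini fun p hp hpp => a_mem_subgroupMod.mp (hg (S ⟨p, ?_⟩) ?_)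
    · exact Nat.mem_primeFactors.mpr ⟨hpp, hp, hn⟩
    · exact Finset.mem_insert_of_mem (Finset.mem_image_of_mem _ (Finset.mem_attach _ _))

variable {s : Finset (Subgroup (QuaternionGroup n))}

theorem exists_subgroupMod_mem_of_inf_eq_frattini (hs : ∀ M ∈ s, IsCoatom M)
    (hinf : s.inf id = frattini (QuaternionGroup n)) (hp : p ∈ n.primeFactors) :
    ∃ c, subgroupMod (Nat.dvd_of_mem_primeFactors hp) c ∈ s := by
  by_contra! hnot
  have hpp := Nat.prime_of_mem_primeFactors hp
  let m := ∏ q ∈ n.primeFactors.erase p, q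
  have hm : a (m : ZMod (2 * n)) ∈ frattini (QuaternionGroup n) := by
    rw [← hinf, Subgroup.mem_finset_inf_id]
    intro M hM
    rcases eq_aSubgroup_or_subgroupMod_of_isCoatom (hs M hM) with rfl | ⟨q, hq, hqp, c, rfl⟩
    · exact a_mem_aSubgroup _
    · have hqp' : q ≠ p := by
        rintro rfl
        exact hnot c hM
      rw [a_mem_subgroupMod, map_natCast, ZMod.natCast_eq_zero_iff]
      exact Finset.dvd_prod_of_mem _ (Finset.mem_erase.mpr
        ⟨hqp', hqp.mem_primeFactors hq (Nat.mem_primeFactors.mp hp).2.2⟩)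
  have hpm :=
    frattini_le_coatom (isCoatom_subgroupMod (Nat.dvd_of_mem_primeFactors hp) hpp 0) hm
  rw [a_mem_subgroupMod, map_natCast, ZMod.natCast_eq_zero_iff] at hpm
  obtain ⟨q, hq, hpq⟩ := (Nat.prime_iff.mp hpp).exists_mem_finset_dvd hpm
  have hqp := Nat.prime_of_mem_primeFactors (Finset.mem_of_mem_erase hq)
  exact (Finset.mem_erase.mp hq).1 ((Nat.prime_dvd_prime_iff_eq hpp hqp).mp hpq).symm

theorem card_le_of_inf_eq_frattini (hs : ∀ M ∈ s, IsCoatom M)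
    (hinf : s.inf id = frattini (QuaternionGroup n)) : n.primeFactors.card + 1 ≤ s.card := by
  classical
  choose c hc using fun p : n.primeFactors => exists_subgroupMod_mem_of_inf_eq_frattini hs hinf p.2
  let S (p : n.primeFactors) := subgroupMod (Nat.dvd_of_mem_primeFactors p.2) (c p)
  have hprime (p : n.primeFactors) := Nat.prime_of_mem_primeFactors p.2
  obtain ⟨k, hk⟩ := ZMod.exists_natCast_eq_of_pairwise_coprime (t := n.primeFactors.attach)
    (fun p _ => (hprime p).ne_zero)
    (fun p _ q _ hpq => (Nat.coprime_primes (hprime p) (hprime q)).mpr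
      (Subtype.coe_ne_coe.mpr hpq)) c
  have hxa (p : n.primeFactors) : xa (k : ZMod (2 * n)) ∈ S p := by
    rw [xa_mem_subgroupMod, map_natCast, hk p (Finset.mem_attach _ _)]
  obtain ⟨M₀, hM₀, hkM₀⟩ : ∃ M₀ ∈ s, xa (k : ZMod (2 * n)) ∉ M₀ := by
    by_contra! h
    exact xa_notMem_aSubgroup _
      (frattini_le_coatom isCoatom_aSubgroup (hinf ▸ Subgroup.mem_finset_inf_id.mpr h))
  have hcard := Finset.card_le_card_of_injOn S
    (s := n.primeFactors.attach) (t := s.erase M₀)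
    (fun p _ => Finset.mem_erase.mpr ⟨fun h => hkM₀ (h ▸ hxa p), hc p⟩)
    (fun p _ q _ h => Subtype.ext
      (Nat.dvd_antisymm (dvd_of_subgroupMod_le h.ge) (dvd_of_subgroupMod_le h.le)))
  rw [Finset.card_attach, Finset.card_erase_of_mem hM₀] at hcard
  have := Finset.card_pos.mpr ⟨M₀, hM₀⟩
  omega

theorem interNum_eq_card_primeFactors_add_one (hn : n ≠ 0) :
    interNum (QuaternionGroup n) = n.primeFactors.card + 1 := by
  obtain ⟨s, hcard, hs, hinf⟩ := exists_coatoms_inf_eq_frattini hn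
  exact le_antisymm ((interNum_le hs hinf).trans hcard)
    (le_interNum ⟨s, hs, hinf⟩ fun _ => card_le_of_inf_eq_frattini)

end QuaternionGroup

/-- `QuaternionGroup n` is the dicyclic group of order `4 * n`. -/
theorem interNum_dicyclic (n : ℕ) (hn : 2 ≤ n) :
    (¬ (∃ m, n = 2 ^ m) → interNum (QuaternionGroup n) = n.primeFactors.card + 1) ∧
    ((∃ m, n = 2 ^ m) → interNum (QuaternionGroup n) = 2) := by
  have hn0 : n ≠ 0 := by omega
  refine ⟨fun _ => QuaternionGroup.interNum_eq_card_primeFactors_add_one hn0, ?_⟩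
  rintro ⟨m, rfl⟩
  have hm : m ≠ 0 := by
    rintro rfl
    omega
  rw [QuaternionGroup.interNum_eq_card_primeFactors_add_one hn0, Nat.primeFactors_prime_pow hm
    Nat.prime_two, Finset.card_singleton]
end

section
/- For every integer n ≥ 4, the intersection number of the symmetric group S_n satisfies ι(S_n) ≤ ⌊(n+8)/4⌋. -/
open Equiv MulAction Finset Subgroup
open scoped Pointwise

theorem interNum_le_card {G : Type*} [Group G] (s : Finset (Subgroup G))
    (hs : ∀ M ∈ s, IsCoatom M) (hbot : s.inf id = ⊥) : interNum G ≤ #s := by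
  have hfrattini : frattini G = ⊥ :=
    eq_bot_iff.mpr <| hbot ▸ Finset.le_inf fun M hM => frattini_le_coatom (hs M hM)
  exact Nat.sInf_le ⟨s, rfl, hs, hbot.trans hfrattini.symm⟩

theorem isCoatom_stabilizer_of_two_mul_ncard_lt {α : Type*} [Finite α] {s : Set α}
    (hs : s.Nonempty) (h : 2 * s.ncard < Nat.card α) : IsCoatom (stabilizer (Perm α) s) := by
  refine Perm.isCoatom_stabilizer hs (Set.nonempty_compl.mpr fun hs' => ?_) h.ne'
  rw [hs', Set.ncard_univ] at h
  omega

theorem interNum_perm_le_of_separating {α ι : Type*} [Finite α] [Fintype ι] (A : ι → Set α)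
    (hne : ∀ i, (A i).Nonempty) (hcard : ∀ i, 2 * (A i).ncard < Nat.card α)
    (hsep : ∀ x y, (∀ i, x ∈ A i ↔ y ∈ A i) → x = y) :
    interNum (Perm α) ≤ Fintype.card ι := by
  classical
  calc interNum (Perm α) ≤ #(univ.image fun i => stabilizer (Perm α) (A i)) := by
        refine interNum_le_card _ (by simpa using fun i =>
          isCoatom_stabilizer_of_two_mul_ncard_lt (hne i) (hcard i)) ?_
        rw [Finset.inf_image, eq_bot_iff]
        intro g hg
        simp only [Finset.inf_eq_iInf, mem_univ, iInf_pos, Function.comp_apply, id, mem_iInf,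
          mem_stabilizer_set] at hg
        exact mem_bot.mpr <| Perm.ext fun x => hsep _ _ fun i => hg i x
    _ ≤ Fintype.card ι := card_image_le

theorem interNum_perm_le_of_finset {α ι : Type*} [Fintype α] [Fintype ι] [DecidableEq ι]
    (F : Finset (Finset ι)) (hF : #F = Fintype.card α) (hne : ∀ i, ∃ S ∈ F, i ∈ S)
    (hcard : ∀ i, 2 * #{S ∈ F | i ∈ S} < Fintype.card α) :
    interNum (Perm α) ≤ Fintype.card ι := by
  let e : α ≃ F := Fintype.equivOfCardEq (by simp [hF])
  have hncard (i : ι) : {x | i ∈ (e x : Finset ι)}.ncard = #{S ∈ F | i ∈ S} := by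
    rw [← Set.ncard_coe_finset]
    refine Set.ncard_congr (fun x _ => (e x : Finset ι)) (fun x hx => by simpa using hx)
      (fun x y _ _ h => e.injective (Subtype.ext h)) fun S hS => ?_
    simp only [coe_filter, Set.mem_ofPred_eq] at hS
    exact ⟨e.symm ⟨S, hS.1⟩, by simpa using hS.2, by simp⟩
  refine interNum_perm_le_of_separating (fun i => {x | i ∈ (e x : Finset ι)})
    (fun i => ?_) (fun i => by simpa [hncard] using hcard i)
    fun x y h => e.injective (Subtype.ext (Finset.ext h))
  obtain ⟨S, hS, hi⟩ := hne i
  exact ⟨e.symm ⟨S, hS⟩, by simpa using hi⟩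

theorem card_filter_mem_powersetCard_two_le {α : Type*} [Fintype α] [DecidableEq α] (i : α) :
    #{S ∈ (univ : Finset α).powersetCard 2 | i ∈ S} ≤ Fintype.card α - 1 := by
  calc #{S ∈ (univ : Finset α).powersetCard 2 | i ∈ S}
      ≤ #((univ.erase i).image fun j => ({i, j} : Finset α)) := by
        refine card_le_card fun S hS => ?_
        simp only [mem_filter, mem_powersetCard, subset_univ, true_and] at hS
        obtain ⟨a, b, hab, rfl⟩ := card_eq_two.mp hS.1
        simp only [mem_image, mem_erase, mem_univ, and_true]
        rcases mem_insert.mp hS.2 with rfl | h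
        · exact ⟨b, hab.symm, rfl⟩
        · rw [mem_singleton.mp h]
          exact ⟨a, hab, pair_comm _ _⟩
    _ ≤ #(univ.erase i) := card_image_le
    _ = Fintype.card α - 1 := by rw [card_erase_of_mem (mem_univ i), card_univ]

theorem interNum_perm_le_of_pairs {α ι : Type*} [Fintype α] [Fintype ι] [DecidableEq ι]
    {d : ℕ} (P : Finset (Finset ι)) (hP : ∀ S ∈ P, #S = 2)
    (hcard : 1 + Fintype.card ι + #P = Fintype.card α) (hdeg : ∀ i, #{S ∈ P | i ∈ S} ≤ d)
    (hd : 2 * (d + 1) < Fintype.card α) : interNum (Perm α) ≤ Fintype.card ι := by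
  set Q : Finset (Finset ι) := insert ∅ (univ.image singleton)
  have hQ : ∀ S ∈ Q, #S ≤ 1 := by simp [Q]
  have hdisj : Disjoint Q P := disjoint_left.mpr fun S hSQ hSP =>
    absurd (hQ S hSQ) (by simp [hP S hSP])
  have hfilter (i : ι) : {S ∈ Q ∪ P | i ∈ S} ⊆ insert {i} {S ∈ P | i ∈ S} := by
    intro S hS
    simp only [Q, mem_filter, mem_union, mem_insert, mem_image] at hS ⊢
    rcases hS with ⟨(rfl | ⟨j, -, rfl⟩) | hSP, hi⟩
    · simp at hi
    · exact Or.inl (by rw [mem_singleton.mp hi])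
    · exact Or.inr ⟨hSP, hi⟩
  refine interNum_perm_le_of_finset (Q ∪ P) ?_
    (fun i => ⟨{i}, by simp [Q], mem_singleton_self i⟩) fun i => ?_
  · rw [card_union_of_disjoint hdisj, card_insert_of_notMem (by simp),
      card_image_of_injective _ singleton_injective, card_univ]
    omega
  · calc 2 * #{S ∈ Q ∪ P | i ∈ S} ≤ 2 * (#{S ∈ P | i ∈ S} + 1) :=
          Nat.mul_le_mul_left 2 ((card_le_card (hfilter i)).trans (card_insert_le _ _))
      _ ≤ 2 * (d + 1) := by gcongr; exact hdeg i
      _ < Fintype.card α := hd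

theorem sub_one_sub_le_choose_two {n m : ℕ} (hm : n + 5 ≤ 4 * m) (h3 : 3 ≤ m) :
    n - 1 - m ≤ m.choose 2 := by
  rw [Nat.choose_two_right, Nat.le_div_iff_mul_le two_pos]
  obtain ⟨k, rfl⟩ := Nat.exists_eq_add_of_le' h3
  have : (n - 1 - (k + 3)) * 2 ≤ 6 * k + 6 := by omega
  exact this.trans (by rw [show k + 3 - 1 = k + 2 by omega]; nlinarith [Nat.le_mul_self k])

theorem interNum_perm_fin_le_of_ne_six_of_ne_eight {n : ℕ} (hn : 4 ≤ n) (h6 : n ≠ 6)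
    (h8 : n ≠ 8) : interNum (Perm (Fin n)) ≤ (n + 8) / 4 := by
  set m := (n + 8) / 4
  have hchoose : n - 1 - m ≤ #((univ : Finset (Fin m)).powersetCard 2) := by
    rw [card_powersetCard, card_univ, Fintype.card_fin]
    exact sub_one_sub_le_choose_two (by omega) (by omega)
  obtain ⟨P, hPsub, hPcard⟩ := exists_subset_card_eq hchoose
  have hdeg (i : Fin m) : #{S ∈ P | i ∈ S} ≤ min (n - 1 - m) (m - 1) := by
    refine le_min (hPcard ▸ card_filter_le _ _) ?_
    simpa using (card_le_card (filter_subset_filter _ hPsub)).trans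
      (card_filter_mem_powersetCard_two_le i)
  simpa using interNum_perm_le_of_pairs (α := Fin n) P
    (fun S hS => (mem_powersetCard.mp (hPsub hS)).2) (by simp; omega) hdeg (by simp; omega)

def pairing6 : Perm (Fin 6) := swap 0 1 * swap 2 3 * swap 4 5

-- `pairingTransversal i` sends `0` to `i`; `pairingStabTransversal j` fixes `0` and sends `2` to
-- `j + 2`. All of them commute with `pairing6`.
def pairingTransversal : Fin 6 → Perm (Fin 6) :=
  ![1, swap 0 1, swap 0 2 * swap 1 3, swap 0 3 * swap 1 2, swap 0 4 * swap 1 5, swap 0 5 * swap 1 4]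

def pairingStabTransversal : Fin 4 → Perm (Fin 6) :=
  ![1, swap 2 3, swap 2 4 * swap 3 5, swap 2 5 * swap 3 4]

theorem exists_mem_centralizer_pairing6 {u v : Fin 6} (hvu : v ≠ u) (hv : v ≠ pairing6 u) :
    ∃ w ∈ centralizer {pairing6}, w 0 = u ∧ w 2 = v := by
  have hA : ∀ i, pairingTransversal i ∈ centralizer {pairing6} := by
    simp only [mem_centralizer_singleton_iff]; decide
  have hB : ∀ j, pairingStabTransversal j ∈ centralizer {pairing6} := by
    simp only [mem_centralizer_singleton_iff]; decide
  obtain ⟨i, j, h0, h2⟩ : ∃ i j, (pairingTransversal i * pairingStabTransversal j) 0 = u ∧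
      (pairingTransversal i * pairingStabTransversal j) 2 = v := by
    revert u v; decide
  exact ⟨_, mul_mem (hA i) (hB j), h0, h2⟩

theorem swap_mem_centralizer_pairing6 (x : Fin 6) :
    swap x (pairing6 x) ∈ centralizer {pairing6} := by
  revert x; simp only [mem_centralizer_singleton_iff]; decide

theorem exists_swap_mem_of_centralizer_pairing6_lt {H : Subgroup (Perm (Fin 6))}
    (hH : centralizer {pairing6} < H) :
    ∃ u v, v ≠ u ∧ v ≠ pairing6 u ∧ swap u v ∈ H := by
  obtain ⟨g, hgH, hgW⟩ := SetLike.exists_of_lt hH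
  obtain ⟨y, hy⟩ : ∃ y, g (pairing6 y) ≠ pairing6 (g y) :=
    not_forall.mp fun h => hgW (mem_centralizer_singleton_iff.mpr (Perm.ext h))
  have hfree : ∀ y, pairing6 y ≠ y := by decide
  refine ⟨g y, g (pairing6 y), g.injective.ne (hfree y), hy, ?_⟩
  rw [swap_apply_apply]
  exact mul_mem (mul_mem hgH (hH.le (swap_mem_centralizer_pairing6 y))) (inv_mem hgH)

theorem eq_top_of_centralizer_pairing6_le_of_swap_mem {H : Subgroup (Perm (Fin 6))}
    (hH : centralizer {pairing6} ≤ H) {u v : Fin 6} (hvu : v ≠ u) (hv : v ≠ pairing6 u)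
    (huv : swap u v ∈ H) : H = ⊤ := by
  have hconj {w : Perm (Fin 6)} (hw : w ∈ H) {a b : Fin 6} (hab : swap a b ∈ H) :
      swap (w a) (w b) ∈ H := by
    rw [swap_apply_apply]
    exact mul_mem (mul_mem hw hab) (inv_mem hw)
  have h02 : swap 0 2 ∈ H := by
    obtain ⟨w, hw, rfl, rfl⟩ := exists_mem_centralizer_pairing6 hvu hv
    simpa using hconj (inv_mem (hH hw)) huv
  have hswap (x y : Fin 6) : swap x y ∈ H := by
    by_cases hyx : y = x
    · rw [hyx, swap_self]
      exact one_mem H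
    by_cases hy : y = pairing6 x
    · exact hy ▸ hH (swap_mem_centralizer_pairing6 x)
    obtain ⟨w, hw, rfl, rfl⟩ := exists_mem_centralizer_pairing6 hyx hy
    exact hconj (hH hw) h02
  rw [eq_top_iff, ← Perm.closure_isSwap, closure_le]
  rintro _ ⟨x, y, -, rfl⟩
  exact hswap x y

theorem isCoatom_centralizer_pairing6 : IsCoatom (centralizer {pairing6}) := by
  refine ⟨fun h => ?_, fun H hH => ?_⟩
  · have : swap 0 2 ∈ centralizer {pairing6} := h ▸ mem_top _
    exact absurd (mem_centralizer_singleton_iff.mp this) (by decide)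
  · obtain ⟨u, v, hvu, hv, huv⟩ := exists_swap_mem_of_centralizer_pairing6_lt hH
    exact eq_top_of_centralizer_pairing6_le_of_swap_mem hH.le hvu hv huv

theorem centralizer_pairing6_inf_stabilizer_inf_stabilizer :
    centralizer {pairing6} ⊓ (stabilizer (Perm (Fin 6)) ({0, 2} : Set (Fin 6)) ⊓
      stabilizer (Perm (Fin 6)) ({0, 4} : Set (Fin 6))) = ⊥ := by
  refine eq_bot_iff.mpr fun g hg => ?_
  simp only [Subgroup.mem_inf, mem_centralizer_singleton_iff, mem_stabilizer_set,
    Perm.smul_def] at hg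
  obtain ⟨hcomm, hA, hB⟩ := hg
  have hτ (x : Fin 6) : g (pairing6 x) = pairing6 (g x) := congrFun (congrArg DFunLike.coe hcomm) x
  -- Commuting with `pairing6`, `g` also stabilizes the preimages of both sets under it, and these
  -- four sets separate points.
  have hsep : ∀ x y : Fin 6, (y ∈ ({0, 2} : Set (Fin 6)) ↔ x ∈ ({0, 2} : Set (Fin 6))) →
      (y ∈ ({0, 4} : Set (Fin 6)) ↔ x ∈ ({0, 4} : Set (Fin 6))) →
      (pairing6 y ∈ ({0, 2} : Set (Fin 6)) ↔ pairing6 x ∈ ({0, 2} : Set (Fin 6))) →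
      (pairing6 y ∈ ({0, 4} : Set (Fin 6)) ↔ pairing6 x ∈ ({0, 4} : Set (Fin 6))) → y = x := by
    decide
  refine mem_bot.mpr (Perm.ext fun x => hsep x (g x) (hA x) (hB x) ?_ ?_)
  · rw [← hτ]; exact hA _
  · rw [← hτ]; exact hB _

theorem interNum_perm_fin_six_le : interNum (Perm (Fin 6)) ≤ 3 := by
  classical
  calc interNum (Perm (Fin 6))
      ≤ #{centralizer {pairing6}, stabilizer (Perm (Fin 6)) ({0, 2} : Set (Fin 6)),
          stabilizer (Perm (Fin 6)) ({0, 4} : Set (Fin 6))} := by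
        refine interNum_le_card _ ?_ ?_
        · simp only [Finset.mem_insert, Finset.mem_singleton, forall_eq_or_imp, forall_eq]
          exact ⟨isCoatom_centralizer_pairing6,
            isCoatom_stabilizer_of_two_mul_ncard_lt (by simp) (by simp),
            isCoatom_stabilizer_of_two_mul_ncard_lt (by simp) (by simp)⟩
        · simpa [inf_insert] using centralizer_pairing6_inf_stabilizer_inf_stabilizer
    _ ≤ 3 := card_le_three

theorem interNum_symm_le (n : ℕ) (hn : 4 ≤ n) :
    interNum (Equiv.Perm (Fin n)) ≤ (n + 8) / 4 := by
  rcases eq_or_ne n 6 with rfl | h6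
  · exact interNum_perm_fin_six_le
  rcases eq_or_ne n 8 with rfl | h8
  · simpa using interNum_perm_le_of_pairs (α := Fin 8) (ι := Fin 4) (d := 2)
      {{0, 1}, {1, 2}, {2, 3}} (by decide) rfl (by decide) (by decide)
  exact interNum_perm_fin_le_of_ne_six_of_ne_eight hn h6 h8
end
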